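/- Let σ_k denote the k-th elementary symmetric polynomial on ℝⁿ and Γ_k = {λ ∈ ℝⁿ : σ_j(λ) > 0 for j = 1,…,k}. Then Γ_k is an open convex cone in ℝⁿ with vertex at the origin, symmetric under permutations of coordinates, and Γ_n ⊆ Γ_{n−1} ⊆ … ⊆ Γ₁. -/

import Mathlib

/-!
Everything except convexity is immediate from continuity, homogeneity and symmetry of the `σ_j`.
Since `Γ_k` is a cone, convexity amounts to `Γ_k + Γ_k ⊆ Γ_k`, and this follows once the quotients
`σ_{j+1} / σ_j` are superadditive on `Γ_j` for `j < k`: positivity of `σ_j` then propagates upwards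
from `λ, μ` to `λ + μ`. Superadditivity is proved by induction on `j` from the identity
`(j + 2) σ_{j+2} / σ_{j+1} = σ_1 - ∑ᵢ λᵢ² / (λᵢ + σ_{j+1}(λ|i) / σ_j(λ|i))`, where `λ|i` omits
`λᵢ`, together with Sedrakyan's inequality `(a + b)² / (p + q) ≤ a² / p + b² / q`. It needs
`λ|i ∈ Γ_j` for `λ ∈ Γ_{j+1}`, which follows from Newton's inequality
`σ_j σ_{j+2} ≤ σ_{j+1}²`. That in turn is `2 p₀ p₂ ≤ p₁²`, valid for every real-rooted `p`
because `Δ p = p₁² - 2 p₀ p₂` satisfies `Δ (f g) = f₀² Δ g + g₀² Δ f`, applied to the `j`-th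
derivative of `∏ᵢ (1 + λᵢ X)`, which is real-rooted by Rolle's theorem.
-/

/-- The `k`-th elementary symmetric polynomial of `λ ∈ ℝⁿ`. -/
def esymm (n k : ℕ) (lam : Fin n → ℝ) : ℝ :=
  ∑ s ∈ Finset.univ.powersetCard k, ∏ i ∈ s, lam i

/-- The Gårding cone `Γ_k = {λ ∈ ℝⁿ : σ_j(λ) > 0, j = 1,…,k}`. -/
def Gamma (n k : ℕ) : Set (Fin n → ℝ) :=
  {lam | ∀ j, 1 ≤ j → j ≤ k → 0 < esymm n j lam}

open Polynomial

namespace Polynomial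

theorem Splits.derivative {p : ℝ[X]} (hp : p.Splits) : p.derivative.Splits := by
  have h₁ := splits_iff_card_roots.1 hp
  have h₂ := card_roots_le_derivative p
  have h₃ := natDegree_derivative_le p
  have h₄ := card_roots' p.derivative
  exact splits_iff_card_roots.2 (by omega)

theorem Splits.iterate_derivative {p : ℝ[X]} (hp : p.Splits) (k : ℕ) :
    (Polynomial.derivative^[k] p).Splits := by
  induction k with
  | zero => exact hp
  | succ k ih => rw [Function.iterate_succ_apply']; exact ih.derivative

theorem Splits.two_mul_coeff_zero_mul_coeff_two_le {R : Type*} [CommRing R] [LinearOrder R]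
    [IsStrictOrderedRing R] {p : R[X]} (hp : p.Splits) :
    2 * (p.coeff 0 * p.coeff 2) ≤ p.coeff 1 ^ 2 := by
  induction hp using Submonoid.closure_induction with
  | mem f hf => obtain ⟨a, rfl⟩ | ⟨a, rfl⟩ := hf <;> simp [coeff_X, coeff_C]
  | one => simp [coeff_one]
  | mul f g _ _ hf hg =>
    have key : (f * g).coeff 1 ^ 2 - 2 * ((f * g).coeff 0 * (f * g).coeff 2) =
        f.coeff 0 ^ 2 * (g.coeff 1 ^ 2 - 2 * (g.coeff 0 * g.coeff 2)) +
          g.coeff 0 ^ 2 * (f.coeff 1 ^ 2 - 2 * (f.coeff 0 * f.coeff 2)) := by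
      simp only [coeff_mul, Finset.Nat.sum_antidiagonal_succ, Finset.Nat.antidiagonal_zero,
        Finset.sum_singleton]
      ring
    nlinarith [mul_nonneg (sq_nonneg (f.coeff 0)) (sub_nonneg.2 hg),
      mul_nonneg (sq_nonneg (g.coeff 0)) (sub_nonneg.2 hf)]

end Polynomial

namespace Multiset

variable {R : Type*} [CommSemiring R]

theorem esymm_cons_succ (a : R) (S : Multiset R) (k : ℕ) :
    (a ::ₘ S).esymm (k + 1) = S.esymm (k + 1) + a * S.esymm k := by
  simp only [esymm, powersetCard_cons, map_add, sum_add, map_map, Function.comp_def, prod_cons,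
    sum_map_mul_left]

theorem coeff_prod_one_add_C_mul_X (S : Multiset R) (k : ℕ) :
    ((S.map fun a => 1 + C a * X).prod).coeff k = S.esymm k := by
  induction S using Multiset.induction generalizing k with
  | empty => cases k <;> simp [esymm, coeff_one, powersetCard_zero_right]
  | cons a S ih =>
    cases k with
    | zero => simp [esymm, mul_coeff_zero, ih 0]
    | succ k => simp [add_mul, mul_assoc, coeff_X_mul, ih, esymm_cons_succ]

theorem natCast_add_two_mul_esymm_mul_esymm_le (S : Multiset ℝ) (r : ℕ) :
    (r + 2) * (S.esymm r * S.esymm (r + 2)) ≤ (r + 1) * S.esymm (r + 1) ^ 2 := by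
  set W := Polynomial.derivative^[r] (S.map fun a => 1 + C a * X).prod
  have hW : W.Splits := (Splits.multisetProd fun f hf => by
    obtain ⟨a, -, rfl⟩ := Multiset.mem_map.1 hf
    exact Splits.of_degree_le_one (by compute_degree)).iterate_derivative r
  have hcoeff (j : ℕ) : j.factorial * W.coeff j = (j + r).factorial * S.esymm (j + r) := by
    rw [coeff_iterate_derivative, coeff_prod_one_add_C_mul_X, nsmul_eq_mul, ← mul_assoc,
      ← Nat.factorial_mul_descFactorial (Nat.le_add_left r j), Nat.add_sub_cancel, Nat.cast_mul]
  have h0 := hcoeff 0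
  have h1 := hcoeff 1
  have h2 := hcoeff 2
  simp only [zero_add, Nat.factorial, Nat.succ_eq_add_one, Nat.cast_mul, Nat.cast_one, one_mul,
    add_comm 1 r, add_comm 2 r] at h0 h1 h2
  have hF : (0 : ℝ) < (r.factorial : ℝ) ^ 2 * (r + 1) := by positivity
  refine le_of_mul_le_mul_left ?_ hF
  have key := hW.two_mul_coeff_zero_mul_coeff_two_le
  push_cast at h1 h2
  rw [h0, h1, show W.coeff 2 = (r + 2) * (r + 1) * r.factorial * S.esymm (r + 2) / 2 by linarith]
    at key
  linear_combination key

theorem esymm_mul_esymm_le_sq (S : Multiset ℝ) (r : ℕ) :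
    S.esymm r * S.esymm (r + 2) ≤ S.esymm (r + 1) ^ 2 := by
  nlinarith [S.natCast_add_two_mul_esymm_mul_esymm_le r, sq_nonneg (S.esymm (r + 1)),
    (r.cast_nonneg : (0 : ℝ) ≤ r)]

end Multiset

theorem add_sq_div_add_le_sq_div_add_sq_div {a b p q : ℝ} (hp : 0 < p) (hq : 0 < q) :
    (a + b) ^ 2 / (p + q) ≤ a ^ 2 / p + b ^ 2 / q := by
  simpa [Fin.sum_univ_two] using
    Finset.sq_sum_div_le_sum_sq_div Finset.univ ![a, b] (g := ![p, q])
      (by simp [Fin.forall_fin_two, hp, hq])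

namespace Finset

variable {ι R : Type*}

def esymm [CommSemiring R] (s : Finset ι) (k : ℕ) (x : ι → R) : R := (s.val.map x).esymm k

section CommSemiring
variable [CommSemiring R] {s : Finset ι}

@[simp] theorem esymm_zero (s : Finset ι) (x : ι → R) : s.esymm 0 x = 1 := by
  simp [esymm, Multiset.esymm]

theorem esymm_one (s : Finset ι) (x : ι → R) : s.esymm 1 x = ∑ i ∈ s, x i := by
  simp [esymm, Finset.esymm_map_val, powersetCard_one]

theorem esymm_insert_succ [DecidableEq ι] {a : ι} (ha : a ∉ s) (k : ℕ) (x : ι → R) :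
    (insert a s).esymm (k + 1) x = s.esymm (k + 1) x + x a * s.esymm k x := by
  rw [esymm, insert_val_of_notMem ha, Multiset.map_cons, Multiset.esymm_cons_succ]; rfl

theorem esymm_succ_of_mem [DecidableEq ι] {i : ι} (hi : i ∈ s) (k : ℕ) (x : ι → R) :
    s.esymm (k + 1) x = (s.erase i).esymm (k + 1) x + x i * (s.erase i).esymm k x := by
  conv_lhs => rw [← insert_erase hi]
  exact esymm_insert_succ (notMem_erase i s) k x

theorem sum_mul_esymm_erase [DecidableEq ι] (s : Finset ι) (k : ℕ) (x : ι → R) :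
    ∑ i ∈ s, x i * (s.erase i).esymm k x = (k + 1) * s.esymm (k + 1) x := by
  induction s using Finset.induction_on generalizing k with
  | empty => simp [esymm, Multiset.esymm, Multiset.powersetCard_zero_right]
  | insert a s ha ih =>
    cases k with
    | zero => simp [esymm_one]
    | succ k =>
      have herase : ∀ i ∈ s, (insert a s).erase i = insert a (s.erase i) := fun i hi =>
        erase_insert_of_ne (ne_of_mem_of_not_mem hi ha).symm
      rw [sum_insert ha, erase_insert ha, sum_congr rfl fun i hi => by
        rw [herase i hi, esymm_insert_succ (fun h => ha (mem_of_mem_erase h))],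
        esymm_insert_succ ha]
      simp only [mul_add, sum_add_distrib, mul_left_comm _ (x a), ← mul_sum, ih]
      push_cast
      ring

theorem esymm_smul (s : Finset ι) (k : ℕ) (t : R) (x : ι → R) :
    s.esymm k (t • x) = t ^ k * s.esymm k x := by
  rw [esymm, esymm, ← smul_eq_mul, Multiset.pow_smul_esymm, Multiset.map_map]; rfl

theorem esymm_comp_equiv {κ : Type*} [Fintype ι] [Fintype κ] (e : κ ≃ ι) (k : ℕ) (x : ι → R) :
    (univ : Finset κ).esymm k (x ∘ e) = (univ : Finset ι).esymm k x := by
  rw [esymm, esymm, ← Multiset.map_map, Multiset.map_univ_val_equiv]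

theorem natCast_add_two_mul_esymm_add_sum_sq_mul_esymm_erase [DecidableEq ι] (s : Finset ι)
    (k : ℕ) (x : ι → R) :
    (k + 2) * s.esymm (k + 2) x + ∑ i ∈ s, x i ^ 2 * (s.erase i).esymm k x =
      s.esymm 1 x * s.esymm (k + 1) x := by
  have euler := sum_mul_esymm_erase s (k + 1) x
  push_cast at euler
  rw [add_assoc, one_add_one_eq_two] at euler
  rw [← euler, ← sum_add_distrib, esymm_one, sum_mul]
  refine sum_congr rfl fun i hi => ?_
  rw [esymm_succ_of_mem hi]
  ring

end CommSemiring

theorem natCast_add_two_mul_esymm_div_esymm [Field R] [DecidableEq ι] (s : Finset ι) (k : ℕ)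
    {x : ι → R} (hx : s.esymm (k + 1) x ≠ 0) :
    (k + 2) * (s.esymm (k + 2) x / s.esymm (k + 1) x) =
      ∑ i ∈ s, x i - ∑ i ∈ s, x i ^ 2 / (s.esymm (k + 1) x / (s.erase i).esymm k x) := by
  simp_rw [div_div_eq_mul_div]
  rw [← sum_div, ← esymm_one, eq_sub_iff_add_eq, ← mul_div_assoc, ← add_div,
    natCast_add_two_mul_esymm_add_sum_sq_mul_esymm_erase, mul_div_cancel_right₀ _ hx]

def gardingCone (s : Finset ι) (k : ℕ) : Set (ι → ℝ) := {x | ∀ j ≤ k, 0 < s.esymm j x}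

section GardingCone

variable {s : Finset ι} {k : ℕ} {x y : ι → ℝ}

theorem gardingCone_anti (s : Finset ι) : Antitone s.gardingCone :=
  fun _ _ hkl _ hx j hj => hx j (hj.trans hkl)

theorem smul_mem_gardingCone {t : ℝ} (ht : 0 < t) (hx : x ∈ s.gardingCone k) :
    t • x ∈ s.gardingCone k := fun j hj => by
  rw [esymm_smul]
  exact mul_pos (pow_pos ht j) (hx j hj)

theorem continuous_esymm (s : Finset ι) (k : ℕ) : Continuous (s.esymm k : (ι → ℝ) → ℝ) := by
  have : (s.esymm k : (ι → ℝ) → ℝ) = fun x => ∑ t ∈ s.powersetCard k, ∏ i ∈ t, x i :=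
    funext fun x => Finset.esymm_map_val x s k
  rw [this]
  fun_prop

theorem isOpen_gardingCone (s : Finset ι) (k : ℕ) : IsOpen (s.gardingCone k) := by
  simp_rw [gardingCone, Set.ofPred_forall]
  exact (Set.finite_Iic k).isOpen_biInter fun j _ =>
    isOpen_lt continuous_const (continuous_esymm s j)

theorem mem_gardingCone_erase [DecidableEq ι] {i : ι} (hi : i ∈ s) :
    ∀ {k : ℕ}, x ∈ s.gardingCone (k + 1) → x ∈ (s.erase i).gardingCone k
  | 0, _ => fun j hj => by simp [Nat.le_zero.1 hj]
  | k + 1, hx => by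
    have hprev := mem_gardingCone_erase hi (gardingCone_anti s (k + 1).le_succ hx)
    intro j hj
    rcases hj.lt_or_eq with hj | rfl
    · exact hprev j (Nat.lt_succ_iff.1 hj)
    have ha := hprev k le_rfl
    have h1 := hx (k + 1) (by omega)
    have h2 := hx (k + 2) le_rfl
    rw [esymm_succ_of_mem hi] at h1 h2
    have hN : (s.erase i).esymm k x * (s.erase i).esymm (k + 2) x ≤
        (s.erase i).esymm (k + 1) x ^ 2 := Multiset.esymm_mul_esymm_le_sq _ k
    by_contra! hb
    -- `h1` forces `x i * σ_k > -σ_{k+1} ≥ 0` on `s.erase i`; then `h2` contradicts `hN`.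
    nlinarith [mul_pos h2 ha, mul_nonneg h1.le (neg_nonneg.2 hb)]

theorem add_mem_gardingCone_of_forall_lt
    (hS : ∀ j < k, s.esymm (j + 1) x / s.esymm j x + s.esymm (j + 1) y / s.esymm j y ≤
      s.esymm (j + 1) (x + y) / s.esymm j (x + y))
    (hx : x ∈ s.gardingCone k) (hy : y ∈ s.gardingCone k) : x + y ∈ s.gardingCone k := by
  intro j hj
  induction j with
  | zero => simp
  | succ j ih =>
    have hq : 0 < s.esymm (j + 1) (x + y) / s.esymm j (x + y) :=
      (add_pos (div_pos (hx _ hj) (hx j (by omega))) (div_pos (hy _ hj) (hy j (by omega)))).trans_le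
        (hS j hj)
    exact (div_pos_iff_of_pos_right (ih (by omega))).1 hq

theorem add_sq_div_esymm_div_esymm_erase_le [DecidableEq ι] {i : ι} (hi : i ∈ s)
    (hS : (s.erase i).esymm (k + 1) x / (s.erase i).esymm k x +
        (s.erase i).esymm (k + 1) y / (s.erase i).esymm k y ≤
      (s.erase i).esymm (k + 1) (x + y) / (s.erase i).esymm k (x + y))
    (hx : x ∈ s.gardingCone (k + 1)) (hy : y ∈ s.gardingCone (k + 1))
    (hxy : x + y ∈ s.gardingCone (k + 1)) :
    (x i + y i) ^ 2 / (s.esymm (k + 1) (x + y) / (s.erase i).esymm k (x + y)) ≤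
      x i ^ 2 / (s.esymm (k + 1) x / (s.erase i).esymm k x) +
        y i ^ 2 / (s.esymm (k + 1) y / (s.erase i).esymm k y) := by
  have hD : ∀ v ∈ s.gardingCone (k + 1), s.esymm (k + 1) v / (s.erase i).esymm k v =
      v i + (s.erase i).esymm (k + 1) v / (s.erase i).esymm k v := fun v hv => by
    rw [esymm_succ_of_mem hi, add_div, add_comm,
      mul_div_cancel_right₀ _ (mem_gardingCone_erase hi hv k le_rfl).ne']
  have hDpos : ∀ v ∈ s.gardingCone (k + 1), 0 < s.esymm (k + 1) v / (s.erase i).esymm k v :=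
    fun v hv => div_pos (hv _ le_rfl) (mem_gardingCone_erase hi hv k le_rfl)
  calc (x i + y i) ^ 2 / (s.esymm (k + 1) (x + y) / (s.erase i).esymm k (x + y))
      ≤ (x i + y i) ^ 2 / (s.esymm (k + 1) x / (s.erase i).esymm k x +
          s.esymm (k + 1) y / (s.erase i).esymm k y) := by
        refine div_le_div_of_nonneg_left (sq_nonneg _) (add_pos (hDpos x hx) (hDpos y hy)) ?_
        rw [hD x hx, hD y hy, hD _ hxy, Pi.add_apply]
        linarith
    _ ≤ _ := add_sq_div_add_le_sq_div_add_sq_div (hDpos x hx) (hDpos y hy)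

theorem esymm_succ_div_esymm_add_le [DecidableEq ι] (k : ℕ) :
    ∀ {s : Finset ι} {x y : ι → ℝ}, x ∈ s.gardingCone k → y ∈ s.gardingCone k →
      s.esymm (k + 1) x / s.esymm k x + s.esymm (k + 1) y / s.esymm k y ≤
        s.esymm (k + 1) (x + y) / s.esymm k (x + y) := by
  induction k using Nat.strong_induction_on with
  | _ k ih =>
  rcases k with _ | k
  · intro s x y _ _
    simp [esymm_one, sum_add_distrib]
  intro s x y hx hy
  have hxy := add_mem_gardingCone_of_forall_lt
    (fun j hj => ih j hj (gardingCone_anti s hj.le hx) (gardingCone_anti s hj.le hy)) hx hy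
  have hterms := sum_le_sum fun i hi => add_sq_div_esymm_div_esymm_erase_le hi
    (ih k k.lt_succ_self (mem_gardingCone_erase hi hx) (mem_gardingCone_erase hi hy)) hx hy hxy
  rw [sum_add_distrib] at hterms
  refine le_of_mul_le_mul_left ?_ (by positivity : (0 : ℝ) < k + 2)
  rw [mul_add, natCast_add_two_mul_esymm_div_esymm s k (hx _ le_rfl).ne',
    natCast_add_two_mul_esymm_div_esymm s k (hy _ le_rfl).ne',
    natCast_add_two_mul_esymm_div_esymm s k (hxy _ le_rfl).ne']
  simp only [Pi.add_apply, sum_add_distrib]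
  linarith

theorem add_mem_gardingCone [DecidableEq ι] (hx : x ∈ s.gardingCone k)
    (hy : y ∈ s.gardingCone k) : x + y ∈ s.gardingCone k :=
  add_mem_gardingCone_of_forall_lt (fun j hj => esymm_succ_div_esymm_add_le j
    (gardingCone_anti s hj.le hx) (gardingCone_anti s hj.le hy)) hx hy

theorem convex_gardingCone [DecidableEq ι] (s : Finset ι) (k : ℕ) :
    Convex ℝ (s.gardingCone k) :=
  ConvexCone.convex ⟨s.gardingCone k, fun _ hc _ hx => smul_mem_gardingCone hc hx,
    fun _ hx _ hy => add_mem_gardingCone hx hy⟩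

end GardingCone
end Finset

theorem Gamma_eq_gardingCone (n k : ℕ) :
    Gamma n k = (Finset.univ : Finset (Fin n)).gardingCone k := by
  ext lam
  simp only [Gamma, Finset.gardingCone, esymm, ← Finset.esymm_map_val, Set.mem_ofPred_eq]
  refine ⟨fun h j hj => ?_, fun h j _ hj => h j hj⟩
  rcases j with _ | j
  · simp
  · exact h _ j.succ_pos hj

/-- `Γ_k` is an open convex cone with vertex at the origin, symmetric under
permutations of the coordinates, and `Γ_n ⊆ Γ_{n−1} ⊆ … ⊆ Γ₁`. -/
theorem stmt_9 (n k : ℕ) :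
    (∀ lam ∈ Gamma n k, ∀ t : ℝ, 0 < t → t • lam ∈ Gamma n k) ∧
    IsOpen (Gamma n k) ∧
    Convex ℝ (Gamma n k) ∧
    (∀ σ : Equiv.Perm (Fin n), ∀ lam ∈ Gamma n k, lam ∘ σ ∈ Gamma n k) ∧
    (∀ j : ℕ, Gamma n (j + 1) ⊆ Gamma n j) := by
  simp only [Gamma_eq_gardingCone]
  refine ⟨fun lam hlam t ht => Finset.smul_mem_gardingCone ht hlam, Finset.isOpen_gardingCone _ k,
    Finset.convex_gardingCone _ k, fun σ lam hlam j hj => ?_,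
    fun j => Finset.gardingCone_anti _ j.le_succ⟩
  rw [Finset.esymm_comp_equiv]
  exact hlam j hj
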